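/- arXiv:2405.04022 — 3 statements merged into one kernel-verified Lean document; each statement's English description precedes it below -/
import Mathlib

section
/- Let f ∈ R[X₁,…,Xₙ] with all partial degrees at least 1, and s : (-ℕ)ⁿ → R. Then the border polynomial β₀(f,s), defined as the restriction of f·Γ(s) to exponents in [1, deg f], equals X₁⋯Xₙ · Σ_{0 ≤ a ≤ deg f - 1} s_{-a} · ν^{a+1} f, where ν^a f = (f | [a, deg f]) / X^a is the generalized Newton divided difference. -/
noncomputable section

variable {R : Type*}

/-- Right-shift action of a (multivariate) polynomial on a sequence indexed by `(-ℕ)^n`;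
the index `a : σ → ℕ` encodes the point `-a`, so `(f ∘ s)_{-b} = ∑ f_a s_{-b-a}`. -/
def shiftA [CommSemiring R] {σ : Type*} (f : MvPolynomial σ R) (s : (σ → ℕ) → R) :
    (σ → ℕ) → R :=
  fun b => ∑ a ∈ f.support, f.coeff a * s (fun j => b j + a j)

/-- The generating function `Γ(s) = ∑_{c ≤ 0} s_c X^c`, as a coefficient function on `ℤ^n`. -/
def GammaZ [Zero R] {n : ℕ} (s : (Fin n → ℕ) → R) : (Fin n → ℤ) → R :=
  fun c => if ∀ i, c i ≤ 0 then s (fun i => (-(c i)).toNat) else 0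

/-- Coefficient function of the product `f · G` in the Laurent series ring
`R((X₁⁻¹, …, Xₙ⁻¹))`. -/
def polyMulG [CommSemiring R] {n : ℕ} (f : MvPolynomial (Fin n) R) (G : (Fin n → ℤ) → R) :
    (Fin n → ℤ) → R :=
  fun c => ∑ a ∈ f.support, f.coeff a * G (fun i => c i - (a i : ℤ))

/-- Vector of partial degrees `δᵢ f`. -/
def degV [CommSemiring R] {n : ℕ} (f : MvPolynomial (Fin n) R) : Fin n → ℕ :=
  fun i => f.support.sup fun a => a i

/-- `degV` as a finitely supported function. -/
def degE [CommSemiring R] {n : ℕ} (f : MvPolynomial (Fin n) R) : Fin n →₀ ℕ :=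
  Finsupp.equivFunOnFinite.symm (degV f)

/-- Embedding of `R[Xᵢ]` into `R[X₁,…,Xₙ]`. -/
def embedP [CommSemiring R] {n : ℕ} (i : Fin n) (p : Polynomial R) : MvPolynomial (Fin n) R :=
  Polynomial.eval₂ MvPolynomial.C (MvPolynomial.X i) p

def toExp {n : ℕ} (c : Fin n → ℤ) : Fin n →₀ ℕ :=
  Finsupp.equivFunOnFinite.symm fun i => (c i).toNat

/-- The coefficient function on `ℤ^n` of a polynomial. -/
def toCoeffZ [CommSemiring R] {n : ℕ} (g : MvPolynomial (Fin n) R) : (Fin n → ℤ) → R :=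
  fun c => if ∀ i, 0 ≤ c i then g.coeff (toExp c) else 0

def oneExp {n : ℕ} : Fin n →₀ ℕ := Finsupp.equivFunOnFinite.symm 1

/-- The border polynomial `β₀(f,s) = (f·Γ(s)) | [1, deg f]`. -/
def mvBeta0 [CommRing R] {n : ℕ} (f : MvPolynomial (Fin n) R) (s : (Fin n → ℕ) → R) :
    MvPolynomial (Fin n) R :=
  ∑ c ∈ Finset.Icc oneExp (degE f),
    MvPolynomial.monomial c (polyMulG f (GammaZ s) fun i => (c i : ℤ))

/-- `β₀(f,s) / (X₁⋯Xₙ)`. -/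
def mvBeta0Div [CommRing R] {n : ℕ} (f : MvPolynomial (Fin n) R) (s : (Fin n → ℕ) → R) :
    MvPolynomial (Fin n) R :=
  ∑ c ∈ Finset.Icc oneExp (degE f),
    MvPolynomial.monomial (c - oneExp) (polyMulG f (GammaZ s) fun i => (c i : ℤ))

/-- `β₀(f,s) / Xᵢ`. -/
def mvBeta0DivXi [CommRing R] {n : ℕ} (i : Fin n) (f : MvPolynomial (Fin n) R)
    (s : (Fin n → ℕ) → R) : MvPolynomial (Fin n) R :=
  ∑ c ∈ Finset.Icc oneExp (degE f),
    MvPolynomial.monomial (c - Finsupp.single i 1) (polyMulG f (GammaZ s) fun i => (c i : ℤ))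

/-- Generalized Newton divided difference `ν^a f = (f | [a, deg f]) / X^a`. -/
def nuA [CommRing R] {n : ℕ} (a : Fin n →₀ ℕ) (f : MvPolynomial (Fin n) R) :
    MvPolynomial (Fin n) R :=
  ∑ b ∈ Finset.Icc a (degE f), MvPolynomial.monomial (b - a) (f.coeff b)

private lemma degE_apply' [CommRing R] {n : ℕ} (f : MvPolynomial (Fin n) R) (i : Fin n) :
    degE f i = degV f i := rfl

private lemma oneExp_apply' {n : ℕ} (i : Fin n) : (oneExp : Fin n →₀ ℕ) i = 1 := rfl

private lemma toExp_apply' {n : ℕ} (c : Fin n → ℤ) (i : Fin n) :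
    toExp c i = (c i).toNat := rfl

private lemma coeff_le' [CommRing R] {n : ℕ} {f : MvPolynomial (Fin n) R} {b : Fin n →₀ ℕ}
    (h : f.coeff b ≠ 0) : b ≤ degE f := by
  rw [Finsupp.le_def]
  intro i
  exact Finset.le_sup (f := fun a => a i) (MvPolynomial.mem_support_iff.mpr h)

private lemma coeff_rhs' [CommRing R] {n : ℕ} (f : MvPolynomial (Fin n) R) (s : (Fin n → ℕ) → R)
    (e : Fin n →₀ ℕ) :
    MvPolynomial.coeff e (∑ a ∈ Finset.Iic (degE f - oneExp),
        MvPolynomial.C (s fun i => a i) * nuA (a + oneExp) f)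
    = ∑ a ∈ Finset.Iic (degE f - oneExp), s (fun i => a i) * f.coeff (e + a + oneExp) := by
  rw [MvPolynomial.coeff_sum]
  refine Finset.sum_congr rfl fun a _ => ?_
  rw [MvPolynomial.coeff_C_mul]
  congr 1
  unfold nuA
  rw [MvPolynomial.coeff_sum]
  have heq : e + a + oneExp - (a + oneExp) = e := by
    ext i; simp only [Finsupp.tsub_apply, Finsupp.add_apply]; omega
  rw [Finset.sum_eq_single (e + a + oneExp)]
  · rw [MvPolynomial.coeff_monomial, if_pos heq]
  · intro b hb hne
    rw [MvPolynomial.coeff_monomial, if_neg]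
    intro hEq
    apply hne
    have hle : a + oneExp ≤ b := (Finset.mem_Icc.mp hb).1
    ext i
    have h1 := Finsupp.le_def.mp hle i
    have h2 := DFunLike.congr_fun hEq i
    simp only [Finsupp.tsub_apply, Finsupp.add_apply] at h1 h2 ⊢
    omega
  · intro hnm
    rw [MvPolynomial.coeff_monomial, if_pos heq]
    by_contra hz
    refine hnm (Finset.mem_Icc.mpr ⟨?_, coeff_le' hz⟩)
    rw [Finsupp.le_def]
    intro i
    simp only [Finsupp.add_apply]
    omega

/-- if all partial degrees of `f` are at least 1, then the border polynomial
`β₀(f,s) = (f·Γ(s))|[1, deg f]` equals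
`X₁⋯Xₙ · ∑_{0 ≤ a ≤ deg f - 1} s_{-a} · ν^{a+1} f`. -/
theorem stmt6 [CommRing R] {n : ℕ} (f : MvPolynomial (Fin n) R) (s : (Fin n → ℕ) → R)
    (hdeg : ∀ i, 1 ≤ degV f i) :
    ∀ c : Fin n → ℤ,
      (if (∀ i, 1 ≤ c i ∧ c i ≤ (degV f i : ℤ)) then polyMulG f (GammaZ s) c else 0) =
      toCoeffZ
        (∑ a ∈ Finset.Iic (degE f - oneExp),
          MvPolynomial.C (s fun i => a i) * nuA (a + oneExp) f)
        (fun i => c i - 1) := by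
  intro c
  by_cases h1 : ∀ i, 1 ≤ c i
  · have hpos : ∀ i, 0 ≤ (fun i => c i - 1) i := fun i => by
      have := h1 i
      show (0 : ℤ) ≤ c i - 1
      omega
    unfold toCoeffZ
    rw [if_pos hpos, coeff_rhs']
    have key : ∀ a : Fin n →₀ ℕ,
        toExp (fun i => c i - 1) + a + oneExp = a + toExp c := by
      intro a
      ext i
      have := h1 i
      simp only [Finsupp.add_apply, toExp_apply', oneExp_apply']
      omega
    simp only [key]
    by_cases h2 : ∀ i, c i ≤ (degV f i : ℤ)
    · have hcond : ∀ i, 1 ≤ c i ∧ c i ≤ (degV f i : ℤ) := fun i => ⟨h1 i, h2 i⟩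
      rw [if_pos hcond]
      have hcD : toExp c ≤ degE f := by
        rw [Finsupp.le_def]
        intro i
        have ha := h2 i
        have hb := h1 i
        simp only [toExp_apply', degE_apply']
        omega
      have h1c : (oneExp : Fin n →₀ ℕ) ≤ toExp c := by
        rw [Finsupp.le_def]
        intro i
        have := h1 i
        simp only [toExp_apply', oneExp_apply']
        omega
      have hsub : Finset.Iic (degE f - toExp c) ⊆ Finset.Iic (degE f - oneExp) :=
        Finset.Iic_subset_Iic.mpr (tsub_le_tsub_left h1c _)
      have hvan : ∀ a ∈ Finset.Iic (degE f - oneExp), a ∉ Finset.Iic (degE f - toExp c) →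
          s (fun i => a i) * f.coeff (a + toExp c) = 0 := by
        intro a _ hna
        have hz : f.coeff (a + toExp c) = 0 := by
          by_contra hz
          apply hna
          rw [Finset.mem_Iic, Finsupp.le_def]
          intro i
          have hb := Finsupp.le_def.mp (coeff_le' hz) i
          simp only [Finsupp.add_apply, toExp_apply', Finsupp.tsub_apply, degE_apply']
            at hb ⊢
          omega
        rw [hz, mul_zero]
      rw [← Finset.sum_subset hsub hvan]
      have mid : ∑ a ∈ Finset.Iic (degE f - toExp c),
            s (fun i => a i) * f.coeff (a + toExp c)
          = ∑ b ∈ Finset.Icc (toExp c) (degE f),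
            f.coeff b * GammaZ s (fun i => c i - (b i : ℤ)) := by
        refine Finset.sum_nbij' (fun a => a + toExp c) (fun b => b - toExp c)
          ?_ ?_ ?_ ?_ ?_
        · intro a ha
          rw [Finset.mem_Iic] at ha
          rw [Finset.mem_Icc]
          constructor
          · exact le_add_self
          · rw [Finsupp.le_def]
            intro i
            have ha' := Finsupp.le_def.mp ha i
            have hc' := Finsupp.le_def.mp hcD i
            simp only [Finsupp.add_apply, Finsupp.tsub_apply] at ha' ⊢
            omega
        · intro b hb
          rw [Finset.mem_Icc] at hb
          rw [Finset.mem_Iic]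
          exact tsub_le_tsub_right hb.2 _
        · intro a _
          exact add_tsub_cancel_right a (toExp c)
        · intro b hb
          exact tsub_add_cancel_of_le (Finset.mem_Icc.mp hb).1
        · intro a _
          unfold GammaZ
          rw [if_pos]
          · rw [mul_comm]
            congr 1
            refine congrArg s (funext fun i => ?_)
            have := h1 i
            show a i = (-(c i - ((a + toExp c) i : ℤ))).toNat
            simp only [Finsupp.add_apply, toExp_apply']
            omega
          · intro i
            have := h1 i
            show c i - ((a + toExp c) i : ℤ) ≤ 0
            simp only [Finsupp.add_apply, toExp_apply']
            omega
      rw [mid]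
      unfold polyMulG
      have hsupp : f.support ⊆ Finset.Iic (degE f) := by
        intro a ha
        exact Finset.mem_Iic.mpr (coeff_le' (MvPolynomial.mem_support_iff.mp ha))
      have hv1 : ∀ a ∈ Finset.Iic (degE f), a ∉ f.support →
          f.coeff a * GammaZ s (fun i => c i - (a i : ℤ)) = 0 := by
        intro a _ ha
        rw [MvPolynomial.notMem_support_iff.mp ha, zero_mul]
      have hv2 : ∀ a ∈ Finset.Iic (degE f), a ∉ Finset.Icc (toExp c) (degE f) →
          f.coeff a * GammaZ s (fun i => c i - (a i : ℤ)) = 0 := by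
        intro a ha hna
        have : ¬ toExp c ≤ a := by
          intro h
          exact hna (Finset.mem_Icc.mpr ⟨h, Finset.mem_Iic.mp ha⟩)
        rw [Finsupp.le_def] at this
        push_neg at this
        obtain ⟨i, hi⟩ := this
        unfold GammaZ
        rw [if_neg, mul_zero]
        intro hall
        have h' := hall i
        have := h1 i
        simp only [toExp_apply'] at hi
        have : c i - (a i : ℤ) ≤ 0 := h'
        omega
      rw [Finset.sum_subset hsupp hv1, ← Finset.sum_subset Finset.Icc_subset_Iic_self hv2]
    · have hncond : ¬ ∀ i, 1 ≤ c i ∧ c i ≤ (degV f i : ℤ) := fun h => h2 fun i => (h i).2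
      rw [if_neg hncond]
      symm
      apply Finset.sum_eq_zero
      intro a _
      push_neg at h2
      obtain ⟨i, hi⟩ := h2
      have hz : f.coeff (a + toExp c) = 0 := by
        by_contra hz
        have hb := Finsupp.le_def.mp (coeff_le' hz) i
        have := h1 i
        simp only [Finsupp.add_apply, toExp_apply', degE_apply'] at hb
        omega
      rw [hz, mul_zero]
  · have hncond : ¬ ∀ i, 1 ≤ c i ∧ c i ≤ (degV f i : ℤ) := fun h => h1 fun i => (h i).1
    rw [if_neg hncond]
    unfold toCoeffZ
    rw [if_neg]
    push_neg at h1
    obtain ⟨i, hi⟩ := h1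
    intro hall
    have h' := hall i
    have : (0 : ℤ) ≤ c i - 1 := h'
    omega
end
end

section
/- Let R be a factorial (UFD) domain, s : -ℕ → R, f ∈ Ann(s) with deg f ≥ 1, d = gcd(f, β₀(f,s)/X) and g = f/d. Then: (a) g ∈ Ann(s); (b) β₀(g,s) = β₀(f,s)/d; (c) gcd(g, β₀(g,s)/X) = 1; (d) if d = 1 and h ∈ Ann(s), then β₀(f,s) divides β₀(h,s) and h = (β₀(h,s)/β₀(f,s))·f. -/
noncomputable section

variable {R : Type*}

/-- Right-shift action on a 1-D sequence indexed by `-ℕ`: index `b : ℕ` encodes `-b`,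
so `(f ∘ s)_{-b} = ∑ f_a s_{-b-a}`. -/
def shiftR1 [CommSemiring R] (f : Polynomial R) (s : ℕ → R) : ℕ → R :=
  fun b => ∑ a ∈ Finset.range (f.natDegree + 1), f.coeff a * s (b + a)

/-- The generating function `Γ(s) = ∑_{c ≤ 0} s_c X^c` as coefficient function on `ℤ`. -/
def Gamma1 [Zero R] (s : ℕ → R) : ℤ → R :=
  fun c => if c ≤ 0 then s (-c).toNat else 0

/-- Coefficient function of the product `f · G` in `R((X⁻¹))`. -/
def polyMul1 [CommSemiring R] (f : Polynomial R) (G : ℤ → R) : ℤ → R :=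
  fun c => ∑ a ∈ Finset.range (f.natDegree + 1), f.coeff a * G (c - (a : ℤ))

/-- Coefficient function on `ℤ` of a polynomial. -/
def toZfun [Semiring R] (p : Polynomial R) : ℤ → R :=
  fun c => if 0 ≤ c then p.coeff c.toNat else 0

/-- The border polynomial `β₀(f,s) = (f·Γ(s)) | [1, deg f]`. -/
def beta0Poly1 [CommSemiring R] (f : Polynomial R) (s : ℕ → R) : Polynomial R :=
  ∑ c ∈ Finset.Icc 1 f.natDegree, Polynomial.monomial c (polyMul1 f (Gamma1 s) (c : ℤ))

/-- `β₀(f,s) / X`. -/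
def beta0DivX1 [CommSemiring R] (f : Polynomial R) (s : ℕ → R) : Polynomial R :=
  ∑ c ∈ Finset.Icc 1 f.natDegree, Polynomial.monomial (c - 1) (polyMul1 f (Gamma1 s) (c : ℤ))

/-!
Work with coefficient sequences on `ℤ`, on which `R[X]` acts by multiplication; for
`h ∈ Ann(s)` the product `h · Γ(s)` is the polynomial `β₀(h,s)`. Writing `f = d g` and
`β₀(f,s) = d X p`, the sequences `g · Γ(s)` and `X p` are bounded above and agree after
multiplication by `d ≠ 0`, hence agree; this gives (a) and (b), and (c) follows from the
maximality of `d`. For (d), associativity and commutativity of the action give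
`h β₀(f,s) = f β₀(h,s)`; after cancelling `X`, coprimality of `f` and `β₀(f,s)/X` forces `f ∣ h`.
-/

open Polynomial

section Action
variable [CommSemiring R]

lemma polyMul1_eq_sum (f : R[X]) (G : ℤ → R) (c : ℤ) :
    polyMul1 f G c = f.sum fun a r => r * G (c - a) :=
  (sum_over_range f (f := fun a r => r * G (c - a)) fun _ => zero_mul _).symm

lemma polyMul1_add (f g : R[X]) (G : ℤ → R) :
    polyMul1 (f + g) G = polyMul1 f G + polyMul1 g G := by
  funext c
  simp only [Pi.add_apply, polyMul1_eq_sum]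
  exact sum_add_index f g _ (fun _ => zero_mul _) fun _ _ _ => add_mul _ _ _

lemma polyMul1_monomial (i : ℕ) (r : R) (G : ℤ → R) (c : ℤ) :
    polyMul1 (monomial i r) G c = r * G (c - i) := by
  rw [polyMul1_eq_sum, sum_monomial_index r (fun a r => r * G (c - a)) (zero_mul _)]

lemma polyMul1_mul (p q : R[X]) (G : ℤ → R) :
    polyMul1 (p * q) G = polyMul1 p (polyMul1 q G) := by
  induction p using Polynomial.induction_on' with
  | add p p' hp hp' => rw [add_mul, polyMul1_add, polyMul1_add, hp, hp']
  | monomial i r =>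
    induction q using Polynomial.induction_on' with
    | add q q' hq hq' =>
      funext c
      rw [mul_add, polyMul1_add, polyMul1_add, hq, hq', polyMul1_monomial, Pi.add_apply,
        Pi.add_apply, polyMul1_monomial, polyMul1_monomial, mul_add]
    | monomial j t =>
      funext c
      rw [monomial_mul_monomial, polyMul1_monomial, polyMul1_monomial, polyMul1_monomial,
        Nat.cast_add, ← sub_sub, mul_assoc]

lemma toZfun_add (p q : R[X]) : toZfun (p + q) = toZfun p + toZfun q := by
  funext c
  simp only [toZfun, Pi.add_apply]
  split_ifs <;> simp

lemma toZfun_of_natDegree_lt {p : R[X]} {c : ℤ} (hc : (p.natDegree : ℤ) < c) : toZfun p c = 0 := by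
  rw [toZfun, if_pos (by omega), coeff_eq_zero_of_natDegree_lt (by omega)]

lemma toZfun_injective : Function.Injective (toZfun (R := R)) := by
  intro p q h
  ext n
  simpa [toZfun] using congrFun h n

lemma polyMul1_toZfun (p q : R[X]) : polyMul1 p (toZfun q) = toZfun (p * q) := by
  induction p using Polynomial.induction_on' with
  | add p p' hp hp' => rw [add_mul, polyMul1_add, toZfun_add, hp, hp']
  | monomial i r =>
    funext c
    rw [polyMul1_monomial]
    unfold toZfun
    by_cases hc : (i : ℤ) ≤ c
    · rw [if_pos (by omega), if_pos (by omega), show c.toNat = (c - i).toNat + i by omega,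
        coeff_monomial_mul]
    · rw [if_neg (by omega), mul_zero]
      split_ifs
      · rw [← C_mul_X_pow_eq_monomial, mul_assoc, coeff_C_mul, coeff_X_pow_mul', if_neg (by omega),
          mul_zero]
      · rfl

end Action

section Cancel
variable [CommRing R]

lemma polyMul1_sub (d : R[X]) (F H : ℤ → R) :
    polyMul1 d (F - H) = polyMul1 d F - polyMul1 d H := by
  funext c
  simp only [polyMul1, Pi.sub_apply, mul_sub, Finset.sum_sub_distrib]

variable [IsDomain R]

/-- Compare the leading coefficient of `d` with the top nonzero term of `F`. -/
lemma eq_zero_of_polyMul1_eq_zero {d : R[X]} (hd : d ≠ 0) {F : ℤ → R} {N : ℤ}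
    (hF : ∀ c, N < c → F c = 0) (h : polyMul1 d F = 0) : F = 0 := by
  by_contra hne
  obtain ⟨c₀, hc₀, htop⟩ := Int.exists_greatest_of_bdd (P := fun c => F c ≠ 0)
    ⟨N, fun c hc => not_lt.mp fun hlt => hc (hF c hlt)⟩ (Function.ne_iff.mp hne)
  have hlow : ∀ a ∈ Finset.range d.natDegree, d.coeff a * F (c₀ + d.natDegree - a) = 0 := by
    intro a ha
    rw [Finset.mem_range] at ha
    have hzero : F (c₀ + d.natDegree - a) = 0 := by
      by_contra hne'
      exact (htop _ hne').not_gt (by omega)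
    rw [hzero, mul_zero]
  have hcoeff := congrFun h (c₀ + d.natDegree)
  rw [polyMul1, Finset.sum_range_succ, Finset.sum_eq_zero hlow, zero_add, add_sub_cancel_right,
    Pi.zero_apply] at hcoeff
  exact mul_ne_zero (leadingCoeff_ne_zero.mpr hd) hc₀ hcoeff

lemma eq_of_polyMul1_eq {d : R[X]} (hd : d ≠ 0) {F H : ℤ → R} {N : ℤ}
    (hF : ∀ c, N < c → F c = 0) (hH : ∀ c, N < c → H c = 0) (h : polyMul1 d F = polyMul1 d H) :
    F = H :=
  sub_eq_zero.mp <| eq_zero_of_polyMul1_eq_zero hd (N := N)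
    (fun c hc => by rw [Pi.sub_apply, hF c hc, hH c hc, sub_zero])
    (by rw [polyMul1_sub, h, sub_self])

end Cancel

section Annihilator
variable [CommSemiring R] (s : ℕ → R)

lemma polyMul1_Gamma1_of_nonpos (h : R[X]) {c : ℤ} (hc : c ≤ 0) :
    polyMul1 h (Gamma1 s) c = shiftR1 h s (-c).toNat := by
  refine Finset.sum_congr rfl fun a _ => ?_
  rw [Gamma1, if_pos (by omega), show (-(c - a)).toNat = (-c).toNat + a by omega]

lemma polyMul1_Gamma1_of_natDegree_lt (h : R[X]) {c : ℤ} (hc : (h.natDegree : ℤ) < c) :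
    polyMul1 h (Gamma1 s) c = 0 := by
  refine Finset.sum_eq_zero fun a ha => ?_
  rw [Finset.mem_range] at ha
  rw [Gamma1, if_neg (by omega), mul_zero]

lemma coeff_beta0Poly1 (f : R[X]) (n : ℕ) :
    (beta0Poly1 f s).coeff n =
      if n ∈ Finset.Icc 1 f.natDegree then polyMul1 f (Gamma1 s) n else 0 := by
  simp only [beta0Poly1, finsetSum_coeff, coeff_monomial]
  exact Finset.sum_ite_eq' _ _ _

lemma beta0Poly1_eq_X_mul (f : R[X]) : beta0Poly1 f s = X * beta0DivX1 f s := by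
  rw [beta0Poly1, beta0DivX1, Finset.mul_sum]
  refine Finset.sum_congr rfl fun c hc => ?_
  rw [Finset.mem_Icc] at hc
  rw [← monomial_one_one_eq_X, monomial_mul_monomial, one_mul, show 1 + (c - 1) = c by omega]

lemma beta0DivX1_eq_mul_of_beta0Poly1_eq_mul {f d g : R[X]}
    (h : beta0Poly1 f s = d * beta0Poly1 g s) : beta0DivX1 f s = d * beta0DivX1 g s :=
  isRegular_X.left <| by
    simp only [← beta0Poly1_eq_X_mul, h, mul_left_comm X d]

variable {s}

lemma polyMul1_Gamma1_eq_toZfun_beta0Poly1 {h : R[X]} (hh : shiftR1 h s = 0) :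
    polyMul1 h (Gamma1 s) = toZfun (beta0Poly1 h s) := by
  funext c
  rcases le_or_gt c 0 with hc | hc
  · rw [polyMul1_Gamma1_of_nonpos s h hc, hh, Pi.zero_apply, toZfun]
    split_ifs
    · rw [coeff_beta0Poly1, if_neg (by simp; omega)]
    · rfl
  · rw [toZfun, if_pos hc.le, coeff_beta0Poly1]
    rcases le_or_gt c h.natDegree with hle | hgt
    · rw [if_pos (by simp; omega), Int.toNat_of_nonneg hc.le]
    · rw [if_neg (by simp; omega), polyMul1_Gamma1_of_natDegree_lt s h hgt]

lemma shiftR1_eq_zero_of_polyMul1_Gamma1_eq_toZfun {g p : R[X]} (hp : p.coeff 0 = 0)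
    (hg : polyMul1 g (Gamma1 s) = toZfun p) : shiftR1 g s = 0 ∧ beta0Poly1 g s = p := by
  constructor
  · funext b
    rw [← Int.toNat_natCast b, ← neg_neg (b : ℤ), ← polyMul1_Gamma1_of_nonpos s g (by omega), hg,
      toZfun, Pi.zero_apply]
    split_ifs with hb
    · rw [show (-(b : ℤ)).toNat = 0 by omega, hp]
    · rfl
  · ext n
    have hpn : toZfun p n = p.coeff n := by simp [toZfun]
    rw [coeff_beta0Poly1]
    split_ifs with hn
    · rw [hg, hpn]
    · rw [Finset.mem_Icc, not_and_or, not_le, not_le, Nat.lt_one_iff] at hn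
      rcases hn with rfl | hn
      · exact hp.symm
      · rw [← hpn, ← hg, polyMul1_Gamma1_of_natDegree_lt s g (by exact_mod_cast hn)]

lemma mul_beta0Poly1_comm {f h : R[X]} (hf : shiftR1 f s = 0) (hh : shiftR1 h s = 0) :
    h * beta0Poly1 f s = f * beta0Poly1 h s := by
  apply toZfun_injective
  rw [← polyMul1_toZfun, ← polyMul1_toZfun, ← polyMul1_Gamma1_eq_toZfun_beta0Poly1 hf,
    ← polyMul1_Gamma1_eq_toZfun_beta0Poly1 hh, ← polyMul1_mul, ← polyMul1_mul, mul_comm]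

end Annihilator

lemma isRelPrime_of_forall_dvd_mul {α : Type*} [CommMonoidWithZero α] [IsCancelMulZero α]
    {d g b : α} (hd : d ≠ 0) (h : ∀ e, e ∣ d * g → e ∣ d * b → e ∣ d) : IsRelPrime g b := by
  intro e hg hb
  obtain ⟨k, hk⟩ := h (d * e) (mul_dvd_mul_left d hg) (mul_dvd_mul_left d hb)
  exact IsUnit.of_mul_eq_one k <| mul_left_cancel₀ hd <| by rw [mul_one, ← mul_assoc, ← hk]

section Main
variable [CommRing R] [IsDomain R] {s : ℕ → R}

lemma shiftR1_eq_zero_of_dvd_beta0DivX1 {d g : R[X]} (hd : d ≠ 0) (hf : shiftR1 (d * g) s = 0)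
    (hdvd : d ∣ beta0DivX1 (d * g) s) :
    shiftR1 g s = 0 ∧ beta0Poly1 (d * g) s = d * beta0Poly1 g s := by
  obtain ⟨p, hp⟩ := hdvd
  have hgΓ : polyMul1 g (Gamma1 s) = toZfun (X * p) := by
    refine eq_of_polyMul1_eq hd (N := max g.natDegree (X * p).natDegree)
      (fun c hc => polyMul1_Gamma1_of_natDegree_lt s g (by omega))
      (fun c hc => toZfun_of_natDegree_lt (by omega)) ?_
    rw [← polyMul1_mul, polyMul1_toZfun, polyMul1_Gamma1_eq_toZfun_beta0Poly1 hf,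
      beta0Poly1_eq_X_mul, hp, mul_left_comm]
  obtain ⟨hg, hβ⟩ := shiftR1_eq_zero_of_polyMul1_Gamma1_eq_toZfun (by simp) hgΓ
  exact ⟨hg, by rw [beta0Poly1_eq_X_mul, hp, hβ, mul_left_comm]⟩

lemma exists_eq_mul_of_isRelPrime [UniqueFactorizationMonoid R] {f h : R[X]} (hf0 : f ≠ 0)
    (hf : shiftR1 f s = 0) (hh : shiftR1 h s = 0) (hrel : IsRelPrime f (beta0DivX1 f s)) :
    ∃ q : R[X], beta0Poly1 h s = q * beta0Poly1 f s ∧ h = q * f := by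
  have hcomm := mul_beta0Poly1_comm hf hh
  obtain ⟨q, rfl⟩ : f ∣ h := by
    refine hrel.dvd_of_dvd_mul_right ⟨beta0DivX1 h s, isRegular_X.left ?_⟩
    show X * _ = X * _
    rw [mul_left_comm, ← beta0Poly1_eq_X_mul, hcomm, beta0Poly1_eq_X_mul, mul_left_comm]
  refine ⟨q, mul_left_cancel₀ hf0 ?_, mul_comm f q⟩
  rw [← hcomm, mul_assoc, mul_left_comm]

end Main

theorem stmt9_general [CommRing R] [IsDomain R] [UniqueFactorizationMonoid R]
    (s : ℕ → R) (f d g : Polynomial R)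
    (hf : shiftR1 f s = 0) (hdeg : 1 ≤ f.natDegree)
    (hd2 : d ∣ beta0DivX1 f s)
    (hd3 : ∀ e : Polynomial R, e ∣ f → e ∣ beta0DivX1 f s → e ∣ d)
    (hg : f = d * g) :
    shiftR1 g s = 0 ∧
    beta0Poly1 f s = d * beta0Poly1 g s ∧
    (∀ e : Polynomial R, e ∣ g → e ∣ beta0DivX1 g s → IsUnit e) ∧
    (d = 1 → ∀ h : Polynomial R, shiftR1 h s = 0 →
      ∃ q : Polynomial R, beta0Poly1 h s = q * beta0Poly1 f s ∧ h = q * f) := by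
  subst hg
  have hd : d ≠ 0 := left_ne_zero_of_mul (ne_zero_of_natDegree_gt hdeg)
  obtain ⟨hg, hβ⟩ := shiftR1_eq_zero_of_dvd_beta0DivX1 hd hf hd2
  refine ⟨hg, hβ, isRelPrime_of_forall_dvd_mul hd ?_, ?_⟩
  · rwa [← beta0DivX1_eq_mul_of_beta0Poly1_eq_mul s hβ]
  · rintro rfl h hh
    exact exists_eq_mul_of_isRelPrime (ne_zero_of_natDegree_gt hdeg) hf hh
      fun e he hb => isUnit_of_dvd_one (hd3 e he hb)

/-- over a factorial domain, with `d = gcd(f, β₀(f,s)/X)` and `g = f/d`: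
(a) `g ∈ Ann(s)`; (b) `β₀(g,s) = β₀(f,s)/d`; (c) `gcd(g, β₀(g,s)/X) = 1`;
(d) if `d = 1` and `h ∈ Ann(s)` then `β₀(f,s) ∣ β₀(h,s)` and
`h = (β₀(h,s)/β₀(f,s))·f`. -/
theorem stmt9 [CommRing R] [IsDomain R] [UniqueFactorizationMonoid R]
    (s : ℕ → R) (f d g : Polynomial R)
    (hf : shiftR1 f s = 0) (hdeg : 1 ≤ f.natDegree)
    (hd1 : d ∣ f) (hd2 : d ∣ beta0DivX1 f s)
    (hd3 : ∀ e : Polynomial R, e ∣ f → e ∣ beta0DivX1 f s → e ∣ d)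
    (hg : f = d * g) :
    shiftR1 g s = 0 ∧
    beta0Poly1 f s = d * beta0Poly1 g s ∧
    (∀ e : Polynomial R, e ∣ g → e ∣ beta0DivX1 g s → IsUnit e) ∧
    (d = 1 → ∀ h : Polynomial R, shiftR1 h s = 0 →
      ∃ q : Polynomial R, beta0Poly1 h s = q * beta0Poly1 f s ∧ h = q * f) :=
  stmt9_general s f d g hf hdeg hd2 hd3 hg
end
end

section
/- Let n ≥ 2, R a domain, s : (-ℕ)ⁿ → R, and fᵢ ∈ Ann(s) ∩ R[Xᵢ] with deg fᵢ ≥ 1 for all i. Fix i and set Δ'ᵢ = deg(∏_{j≠i} fⱼ) - 1 (a vector indexed by {1,…,n}\{i}). Then for g ∈ R[Xᵢ]: g annihilates every section s^{(a')} for all a' ∈ (-ℕ)^{n-1} if and only if g annihilates s^{(a')} for all a' with -Δ'ᵢ ≤ a' ≤ 0. -/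
noncomputable section

variable {R : Type*}

set_option linter.unusedSectionVars false

section Aux
open MvPolynomial
variable [CommSemiring R] {σ : Type*} [DecidableEq σ]

lemma shiftA_eq_sum_of_subset (f : MvPolynomial σ R) (s : (σ → ℕ) → R)
    (b : σ → ℕ) {T : Finset (σ →₀ ℕ)} (hT : f.support ⊆ T) :
    shiftA f s b = ∑ a ∈ T, f.coeff a * s (fun j => b j + a j) := by
  unfold shiftA
  apply Finset.sum_subset hT
  intro a _ ha
  rw [MvPolynomial.notMem_support_iff.mp ha, zero_mul]

lemma shiftA_monomial (m : σ →₀ ℕ) (c : R) (s : (σ → ℕ) → R) (b : σ → ℕ) :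
    shiftA (monomial m c) s b = c * s (fun j => b j + m j) := by
  rw [shiftA_eq_sum_of_subset _ s b MvPolynomial.support_monomial_subset,
    Finset.sum_singleton, MvPolynomial.coeff_monomial, if_pos rfl]

set_option linter.unusedSectionVars false in
lemma shiftA_zero (s : (σ → ℕ) → R) (b : σ → ℕ) : shiftA (0 : MvPolynomial σ R) s b = 0 := by
  simp [shiftA]

lemma shiftA_add (f g : MvPolynomial σ R) (s : (σ → ℕ) → R) (b : σ → ℕ) :
    shiftA (f + g) s b = shiftA f s b + shiftA g s b := by
  rw [shiftA_eq_sum_of_subset (f + g) s b (MvPolynomial.support_add),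
    shiftA_eq_sum_of_subset f s b Finset.subset_union_left,
    shiftA_eq_sum_of_subset g s b Finset.subset_union_right,
    ← Finset.sum_add_distrib]
  exact Finset.sum_congr rfl fun a _ => by rw [MvPolynomial.coeff_add, add_mul]

lemma shiftA_finsetSum {ι : Type*} (t : Finset ι) (F : ι → MvPolynomial σ R)
    (s : (σ → ℕ) → R) (b : σ → ℕ) :
    shiftA (∑ x ∈ t, F x) s b = ∑ x ∈ t, shiftA (F x) s b := by
  induction t using Finset.cons_induction with
  | empty => simp [shiftA_zero]
  | cons x t hx ih => rw [Finset.sum_cons, shiftA_add, ih, Finset.sum_cons]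

lemma embedP_eq {n : ℕ} (j : Fin n) (p : Polynomial R) :
    embedP j p = ∑ k ∈ Finset.range (p.natDegree + 1),
      MvPolynomial.monomial (Finsupp.single j k) (p.coeff k) := by
  rw [embedP, Polynomial.eval₂_eq_sum_range]
  exact Finset.sum_congr rfl fun k _ => by
    rw [MvPolynomial.X_pow_eq_monomial, MvPolynomial.C_mul_monomial, mul_one]

lemma shiftA_embedP {n : ℕ} (j : Fin n) (p : Polynomial R) (s : (Fin n → ℕ) → R)
    (b : Fin n → ℕ) :
    shiftA (embedP j p) s b = ∑ k ∈ Finset.range (p.natDegree + 1),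
      p.coeff k * s (fun l => b l + if l = j then k else 0) := by
  rw [embedP_eq, shiftA_finsetSum]
  refine Finset.sum_congr rfl fun k _ => ?_
  rw [shiftA_monomial]
  refine congrArg _ (congrArg s ?_)
  funext l
  rw [Finsupp.single_apply]
  by_cases h : l = j
  · simp [h]
  · simp [h, Ne.symm h]

end Aux

/-- for `n ≥ 2`, `R` a domain, `fᵢ ∈ Ann(s) ∩ R[Xᵢ]` with `deg fᵢ ≥ 1`,
and `Δ'ᵢ = deg(∏_{j≠i} fⱼ) - 1`: a polynomial `g ∈ R[Xᵢ]` annihilates every section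
`s^{(a')}` iff it annihilates the sections with `-Δ'ᵢ ≤ a' ≤ 0`. -/
theorem stmt19 [CommRing R] [IsDomain R] {n : ℕ} (hn : 2 ≤ n)
    (s : (Fin n → ℕ) → R) (f : Fin n → Polynomial R)
    (hdeg : ∀ j, 1 ≤ (f j).natDegree)
    (hann : ∀ j, shiftA (embedP j (f j)) s = 0)
    (i : Fin n) (g : Polynomial R) :
    (∀ a' : {j : Fin n // j ≠ i} → ℕ,
        shiftR1 g (fun a => s fun j => if h : j = i then a else a' ⟨j, h⟩) = 0) ↔
    (∀ a' : {j : Fin n // j ≠ i} → ℕ,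
        (∀ j : {j : Fin n // j ≠ i}, a' j ≤ (f j.val).natDegree - 1) →
        shiftR1 g (fun a => s fun j => if h : j = i then a else a' ⟨j, h⟩) = 0) := by
  constructor
  · intro h a' _
    exact h a'
  intro hbox
  set T : ({j : Fin n // j ≠ i} → ℕ) → ℕ → R :=
    fun a' => shiftR1 g (fun a => s fun j => if h : j = i then a else a' ⟨j, h⟩) with hT
  -- the recurrence in each direction j ≠ i
  have hrec : ∀ (a'' : {j : Fin n // j ≠ i} → ℕ) (j : {j : Fin n // j ≠ i}) (b : ℕ),
      ∑ k ∈ Finset.range ((f j.val).natDegree + 1),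
        (f j.val).coeff k * T (fun m => a'' m + if m = j then k else 0) b = 0 := by
    intro a'' j b
    have h0 : ∀ a : ℕ, ∑ k ∈ Finset.range ((f j.val).natDegree + 1),
        (f j.val).coeff k * s (fun l => if h : l = i then b + a
          else a'' ⟨l, h⟩ + if (⟨l, h⟩ : {j : Fin n // j ≠ i}) = j then k else 0) = 0 := by
      intro a
      have h1 := congrFun (hann j.val) (fun l => if h : l = i then b + a else a'' ⟨l, h⟩)
      rw [shiftA_embedP, Pi.zero_apply] at h1
      refine Eq.trans ?_ h1
      refine Finset.sum_congr rfl fun k _ => ?_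
      refine congrArg _ (congrArg s ?_)
      funext l
      by_cases h : l = i
      · subst h
        rw [dif_pos rfl, dif_pos rfl, if_neg, add_zero]
        intro hli
        exact j.2 hli.symm
      · rw [dif_neg h, dif_neg h]
        congr 1
        simp [Subtype.ext_iff]
    simp only [hT, shiftR1, Finset.mul_sum]
    rw [Finset.sum_comm]
    refine Finset.sum_eq_zero fun a _ => ?_
    have h2 : ∑ k ∈ Finset.range ((f j.val).natDegree + 1),
        (f j.val).coeff k * (g.coeff a * s (fun l => if h : l = i then b + a
          else a'' ⟨l, h⟩ + if (⟨l, h⟩ : {j : Fin n // j ≠ i}) = j then k else 0))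
        = g.coeff a * ∑ k ∈ Finset.range ((f j.val).natDegree + 1),
            (f j.val).coeff k * s (fun l => if h : l = i then b + a
              else a'' ⟨l, h⟩ + if (⟨l, h⟩ : {j : Fin n // j ≠ i}) = j then k else 0) := by
      rw [Finset.mul_sum]
      exact Finset.sum_congr rfl fun k _ => by ring
    rw [h2, h0 a, mul_zero]
  -- main strong induction on the sum of coordinates
  have key : ∀ N, ∀ a' : {j : Fin n // j ≠ i} → ℕ, (∑ m, a' m) = N → ∀ b, T a' b = 0 := by
    intro N
    induction N using Nat.strong_induction_on with
    | _ N IH =>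
      intro a' hN b
      by_cases hc : ∀ j : {j : Fin n // j ≠ i}, a' j ≤ (f j.val).natDegree - 1
      · exact congrFun (hbox a' hc) b
      push_neg at hc
      obtain ⟨j, hj⟩ := hc
      have hdj : (f j.val).natDegree ≤ a' j := by
        have := hdeg j.val; omega
      set a'' : {j : Fin n // j ≠ i} → ℕ :=
        fun m => if m = j then a' j - (f j.val).natDegree else a' m with ha''
      have hptw : ∀ m, a'' m + (if m = j then (f j.val).natDegree else 0) = a' m := by
        intro m
        by_cases hm : m = j
        · subst hm
          simp only [ha'', if_pos rfl, if_true]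
          omega
        · simp [ha'', hm]
      have hrecj := hrec a'' j b
      rw [Finset.sum_range_succ] at hrecj
      have htop : (fun m => a'' m + if m = j then (f j.val).natDegree else 0) = a' := by
        funext m; exact hptw m
      rw [htop] at hrecj
      have hsa : (∑ m, a'' m) + (f j.val).natDegree = N := by
        calc (∑ m, a'' m) + (f j.val).natDegree
            = ∑ m, (a'' m + if m = j then (f j.val).natDegree else 0) := by
              rw [Finset.sum_add_distrib,
                Finset.sum_ite_eq' Finset.univ j (fun _ => (f j.val).natDegree)]
              simp
          _ = ∑ m, a' m := Finset.sum_congr rfl fun m _ => hptw m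
          _ = N := hN
      have hlow : ∑ k ∈ Finset.range ((f j.val).natDegree),
          (f j.val).coeff k * T (fun m => a'' m + if m = j then k else 0) b = 0 := by
        refine Finset.sum_eq_zero fun k hk => ?_
        rw [Finset.mem_range] at hk
        have h1 : (∑ m, (a'' m + if m = j then k else 0)) = (∑ m, a'' m) + k := by
          rw [Finset.sum_add_distrib, Finset.sum_ite_eq' Finset.univ j (fun _ => k)]
          simp
        have hlt : (∑ m, (a'' m + if m = j then k else 0)) < N := by omega
        rw [IH _ hlt _ rfl b, mul_zero]
      rw [hlow, zero_add] at hrecj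
      have hne : f j.val ≠ 0 := fun h0 => by simpa [h0] using hdeg j.val
      have hlead : (f j.val).coeff (f j.val).natDegree ≠ 0 :=
        Polynomial.leadingCoeff_ne_zero.mpr hne
      rcases mul_eq_zero.mp hrecj with h | h
      · exact absurd h hlead
      · exact h
  intro a'
  funext b
  exact key _ a' rfl b
end
end
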